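/- Let n ≥ 3 and let f = (f_0, …, f_n) be a non-degenerate symmetric signature of arity n. Then f satisfies a second order recurrence relation with coefficients (a, b, c) (not all zero) satisfying b² − 4ac ≠ 0 if and only if there exist a_0, b_0, a_1, b_1 ∈ ℂ with a_0 b_1 ≠ a_1 b_0 such that f_k = a_0^{n−k} b_0^k + a_1^{n−k} b_1^k for all 0 ≤ k ≤ n. -/

import Mathlib

/-!
Factor the characteristic form as `a x² + b x y + c y² = (q₀ x - p₀ y) (q₁ x - p₁ y)`. Its
discriminant is `(q₀ p₁ - p₀ q₁)²`, so it is nonzero exactly when the roots `(p₀ : q₀)` and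
`(p₁ : q₁)` are distinct. The recurrence then factors into two first order ones:
`g k = q₀ f k - p₀ f (k+1)` satisfies `q₁ g k = p₁ g (k+1)`, so `g` is a multiple of `(p₁, q₁)^{⊗(n-1)}`, and subtracting a suitable multiple
of `(p₁, q₁)^{⊗n}` from `f` leaves a multiple of `(p₀, q₀)^{⊗n}`. Non-degeneracy makes both
multiples nonzero, and their `n`-th roots are absorbed into the vectors.
-/

section Field

variable {K : Type*} [Field K]

def SatisfiesRecurrence (n : ℕ) (f : ℕ → K) (a b c : K) : Prop :=
  ∀ k, k + 2 ≤ n → a * f k + b * f (k + 1) + c * f (k + 2) = 0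

theorem discrim_factored (p₀ q₀ p₁ q₁ : K) :
    discrim (q₀ * q₁) (-(q₀ * p₁ + p₀ * q₁)) (p₀ * p₁) = (q₀ * p₁ - p₀ * q₁) ^ 2 := by
  rw [discrim]; ring

theorem exists_factorization_of_discrim_ne_zero [NeZero (2 : K)] {a b c s : K}
    (hs : discrim a b c = s * s) (hd : discrim a b c ≠ 0) :
    ∃ p₀ q₀ p₁ q₁ : K, a = q₀ * q₁ ∧ b = -(q₀ * p₁ + p₀ * q₁) ∧ c = p₀ * p₁ := by
  rcases eq_or_ne c 0 with rfl | hc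
  · have hb : b ≠ 0 := by rintro rfl; simp [discrim] at hd
    exact ⟨0, -b, 1, -a / b, by field_simp, by ring, by ring⟩
  · refine ⟨c, (-b + s) / 2, 1, (-b - s) / (2 * c), ?_, by field_simp; ring, by ring⟩
    rw [discrim] at hs
    field_simp
    linear_combination -hs

theorem satisfiesRecurrence_factored_pow {n : ℕ} (p₀ q₀ p₁ q₁ : K) :
    SatisfiesRecurrence n (fun k => p₀ ^ (n - k) * q₀ ^ k)
      (q₀ * q₁) (-(q₀ * p₁ + p₀ * q₁)) (p₀ * p₁) := by
  intro k hk
  obtain ⟨j, rfl⟩ := Nat.exists_eq_add_of_le hk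
  dsimp only
  rw [show k + 2 + j - k = j + 2 by omega, show k + 2 + j - (k + 1) = j + 1 by omega,
    Nat.add_sub_cancel_left]
  ring

theorem exists_eq_mul_pow_mul_pow_of_mul_eq_mul {p q : K} (hpq : p ≠ 0 ∨ q ≠ 0) {m : ℕ}
    {g : ℕ → K} (h : ∀ k < m, q * g k = p * g (k + 1)) :
    ∃ μ, ∀ k ≤ m, g k = μ * p ^ (m - k) * q ^ k := by
  rcases eq_or_ne p 0 with rfl | hp
  · have hq : q ≠ 0 := hpq.resolve_left (not_not.2 rfl)
    refine ⟨g m / q ^ m, fun k hk => ?_⟩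
    rcases hk.lt_or_eq with hk | rfl
    · have hg : g k = 0 := by simpa [hq] using h k hk
      simp [hg, zero_pow (Nat.sub_ne_zero_of_lt hk)]
    · field_simp
      simp
  · have hpow : ∀ k ≤ m, g k * p ^ k = g 0 * q ^ k := by
      intro k
      induction k with
      | zero => simp
      | succ k ih =>
        intro hk
        calc g (k + 1) * p ^ (k + 1) = p * g (k + 1) * p ^ k := by ring
          _ = q * (g k * p ^ k) := by rw [← h k hk]; ring
          _ = g 0 * q ^ (k + 1) := by rw [ih (by omega)]; ring
    refine ⟨g 0 / p ^ m, fun k hk => ?_⟩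
    obtain ⟨j, rfl⟩ := Nat.exists_eq_add_of_le hk
    rw [Nat.add_sub_cancel_left]
    field_simp
    linear_combination p ^ j * hpow k hk

theorem exists_eq_add_of_satisfiesRecurrence_factored {n : ℕ} (hn : 0 < n) {p₀ q₀ p₁ q₁ : K}
    (hdet : q₀ * p₁ - p₀ * q₁ ≠ 0) {f : ℕ → K}
    (hf : SatisfiesRecurrence n f (q₀ * q₁) (-(q₀ * p₁ + p₀ * q₁)) (p₀ * p₁)) :
    ∃ ρ ν : K, ∀ k ≤ n, f k = ρ * p₀ ^ (n - k) * q₀ ^ k + ν * p₁ ^ (n - k) * q₁ ^ k := by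
  have h₀ : p₀ ≠ 0 ∨ q₀ ≠ 0 := by by_contra! h; apply hdet; simp [h]
  have h₁ : p₁ ≠ 0 ∨ q₁ ≠ 0 := by by_contra! h; apply hdet; simp [h]
  obtain ⟨μ, hμ⟩ := exists_eq_mul_pow_mul_pow_of_mul_eq_mul h₁ (m := n - 1)
    (g := fun k => q₀ * f k - p₀ * f (k + 1)) fun k hk => by
      linear_combination hf k (by omega)
  set ν := μ / (q₀ * p₁ - p₀ * q₁)
  have hν : ν * (q₀ * p₁ - p₀ * q₁) = μ := div_mul_cancel₀ μ hdet
  obtain ⟨ρ, hρ⟩ := exists_eq_mul_pow_mul_pow_of_mul_eq_mul h₀ (m := n)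
    (g := fun k => f k - ν * p₁ ^ (n - k) * q₁ ^ k) fun k hk => by
      obtain ⟨j, rfl⟩ : ∃ j, n = k + 1 + j := ⟨n - (k + 1), by omega⟩
      have hμk := hμ k (by omega)
      rw [show k + 1 + j - 1 - k = j by omega] at hμk
      rw [show k + 1 + j - k = j + 1 by omega, show k + 1 + j - (k + 1) = j by omega]
      linear_combination hμk - p₁ ^ j * q₁ ^ k * hν
  exact ⟨ρ, ν, fun k hk => by linear_combination hρ k hk⟩

theorem mul_pow_sub_mul_pow_eq {M : Type*} [CommMonoid M] {n k : ℕ} (hk : k ≤ n) (r p q : M) :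
    r ^ n * p ^ (n - k) * q ^ k = (r * p) ^ (n - k) * (r * q) ^ k := by
  obtain ⟨j, rfl⟩ := Nat.exists_eq_add_of_le hk
  rw [Nat.add_sub_cancel_left, mul_pow, mul_pow, pow_add]
  ac_rfl

section IsAlgClosed

variable [IsAlgClosed K]

theorem exists_eq_pow_mul_pow_of_eq_mul {n : ℕ} (hn : 0 < n) {f : ℕ → K} {ν p q : K}
    (h : ∀ k ≤ n, f k = ν * p ^ (n - k) * q ^ k) :
    ∃ a b : K, ∀ k ≤ n, f k = a ^ (n - k) * b ^ k := by
  obtain ⟨r, rfl⟩ := IsAlgClosed.exists_pow_nat_eq ν hn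
  exact ⟨r * p, r * q, fun k hk => (h k hk).trans (mul_pow_sub_mul_pow_eq hk r p q)⟩

theorem exists_eq_add_pow_of_satisfiesRecurrence [NeZero (2 : K)] {n : ℕ} (hn : 0 < n)
    {f : ℕ → K} (hnd : ¬ ∃ a b : K, ∀ k ≤ n, f k = a ^ (n - k) * b ^ k) {a b c : K}
    (hd : discrim a b c ≠ 0) (hf : SatisfiesRecurrence n f a b c) :
    ∃ a₀ b₀ a₁ b₁ : K, a₀ * b₁ ≠ a₁ * b₀ ∧
      ∀ k ≤ n, f k = a₀ ^ (n - k) * b₀ ^ k + a₁ ^ (n - k) * b₁ ^ k := by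
  obtain ⟨s, hs⟩ := IsAlgClosed.exists_eq_mul_self (discrim a b c)
  obtain ⟨p₀, q₀, p₁, q₁, rfl, rfl, rfl⟩ := exists_factorization_of_discrim_ne_zero hs hd
  have hdet : q₀ * p₁ - p₀ * q₁ ≠ 0 := by
    rw [discrim_factored] at hd; exact pow_ne_zero_iff two_ne_zero |>.mp hd
  obtain ⟨ρ, ν, hρν⟩ := exists_eq_add_of_satisfiesRecurrence_factored hn hdet hf
  have hρ : ρ ≠ 0 := by
    rintro rfl
    exact hnd (exists_eq_pow_mul_pow_of_eq_mul hn fun k hk => by simpa using hρν k hk)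
  have hν : ν ≠ 0 := by
    rintro rfl
    exact hnd (exists_eq_pow_mul_pow_of_eq_mul hn fun k hk => by simpa using hρν k hk)
  obtain ⟨r₀, rfl⟩ := IsAlgClosed.exists_pow_nat_eq ρ hn
  obtain ⟨r₁, rfl⟩ := IsAlgClosed.exists_pow_nat_eq ν hn
  refine ⟨r₀ * p₀, r₀ * q₀, r₁ * p₁, r₁ * q₁, fun h => ?_, fun k hk => ?_⟩
  · have hr : r₀ * r₁ ≠ 0 := mul_ne_zero (ne_zero_pow hn.ne' hρ) (ne_zero_pow hn.ne' hν)
    exact mul_ne_zero hr hdet (by linear_combination -h)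
  · rw [hρν k hk, mul_pow_sub_mul_pow_eq hk, mul_pow_sub_mul_pow_eq hk]

end IsAlgClosed

end Field

theorem stmt_3 (n : ℕ) (hn : 3 ≤ n) (f : ℕ → ℂ)
    (hnd : ¬ ∃ a b : ℂ, ∀ k ≤ n, f k = a ^ (n - k) * b ^ k) :
    (∃ a b c : ℂ, (a, b, c) ≠ 0 ∧ b ^ 2 - 4 * a * c ≠ 0 ∧
        ∀ k, k + 2 ≤ n → a * f k + b * f (k + 1) + c * f (k + 2) = 0) ↔
      (∃ a₀ b₀ a₁ b₁ : ℂ, a₀ * b₁ ≠ a₁ * b₀ ∧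
        ∀ k ≤ n, f k = a₀ ^ (n - k) * b₀ ^ k + a₁ ^ (n - k) * b₁ ^ k) := by
  constructor
  · rintro ⟨a, b, c, -, hd, hf⟩
    exact exists_eq_add_pow_of_satisfiesRecurrence (by omega) hnd hd hf
  · rintro ⟨a₀, b₀, a₁, b₁, hdet, hf⟩
    have hd : discrim (b₀ * b₁) (-(b₀ * a₁ + a₀ * b₁)) (a₀ * a₁) ≠ 0 := by
      rw [discrim_factored]
      exact pow_ne_zero 2 (sub_ne_zero.2 fun h => hdet (by linear_combination -h))
    refine ⟨_, _, _, fun h => hd ?_, hd, fun k hk => ?_⟩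
    · simp only [Prod.mk_eq_zero] at h
      rw [h.1, h.2.1, h.2.2, discrim]; ring
    · have h₀ := satisfiesRecurrence_factored_pow (n := n) a₀ b₀ a₁ b₁ k hk
      have h₁ := satisfiesRecurrence_factored_pow (n := n) a₁ b₁ a₀ b₀ k hk
      rw [hf k (by omega), hf (k + 1) (by omega), hf (k + 2) hk]
      linear_combination h₀ + h₁
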